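/- arXiv:2409.08768 — 3 statements merged into one kernel-verified Lean document; each statement's English description precedes it below -/
import Mathlib

section
/- Let T > 0 and let v : [0,T] × ℝ^n → ℝ^n be a Borel time-dependent vector field. Let φ : [0,T] × ℝ^n → ℝ^n be jointly continuous with φ(0,x) = x for all x, and suppose that for every x ∈ ℝ^n and t ∈ [0,T] the curve s ↦ φ(s,x) is differentiable at t with derivative v(t, φ(t,x)). Let ρ be a Borel probability measure on ℝ^n, define ρ_t = φ(t,·)#ρ, and assume ∫_0^T ∫_{ℝ^n} |v(t, φ(t,x))| dρ(x) dt < ∞. Then the family (ρ_t)_{t∈[0,T]} together with v satisfies the weak continuity equation. -/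
/-!
Along a trajectory `t ↦ Φ t x`, the chain rule gives
`d/dt φ(Φ t x, t) = ∂ₜφ + ⟨v t (Φ t x), ∇ₓφ⟩` evaluated at `(Φ t x, t)`. Integrating against
`ρₜ = Φ(t,·)#ρ` is integrating this against `ρ`; after exchanging the `t`- and `x`-integrals
(legitimate since the integrand is bounded by `C (‖v t (Φ t x)‖ + 1)`), the fundamental theorem
of calculus reduces each `t`-integral to `φ(Φ T x, T) - φ(Φ 0 x, 0) = 0`, because the support of
`φ` avoids the times `0` and `T`.
-/

open MeasureTheory
open scoped RealInnerProductSpace ENNReal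

/-- The family of Borel probability measures `ρ t`, `t ∈ [0,T]`, together with the
time-dependent vector field `v` satisfies the weak continuity equation
`∂ₜ ρₜ + div (vₜ ρₜ) = 0` if for every `C¹` test function `φ(x,t)` with compact support
contained in `ℝⁿ × (0,T)`,
`∫_0^T ∫ (∂ₜ φ(x,t) + ⟨v(t,x), ∇ₓ φ(x,t)⟩) dρₜ(x) dt = 0`. -/
def WeakContinuityEquation (n : ℕ) (T : ℝ)
    (ρ : ℝ → Measure (EuclideanSpace ℝ (Fin n)))
    (v : ℝ → EuclideanSpace ℝ (Fin n) → EuclideanSpace ℝ (Fin n)) : Prop :=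
  ∀ φ : EuclideanSpace ℝ (Fin n) × ℝ → ℝ,
    ContDiff ℝ 1 φ → HasCompactSupport φ →
    tsupport φ ⊆ Set.univ ×ˢ Set.Ioo 0 T →
    (∫ t in Set.Icc (0 : ℝ) T, ∫ x, (deriv (fun s => φ (x, s)) t +
      ⟪v t x, gradient (fun y => φ (y, t)) x⟫) ∂(ρ t)) = 0

open Set Function

theorem integral_Icc_eq_sub_of_hasDerivWithinAt {F : Type*} [NormedAddCommGroup F]
    [NormedSpace ℝ F] [CompleteSpace F] {f f' : ℝ → F} {a b : ℝ} (hab : a ≤ b)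
    (hf : ∀ t ∈ Icc a b, HasDerivWithinAt f (f' t) (Icc a b) t)
    (hf' : IntegrableOn f' (Icc a b)) :
    ∫ t in Icc a b, f' t = f b - f a := by
  rw [integral_Icc_eq_integral_Ioc, ← intervalIntegral.integral_of_le hab]
  refine intervalIntegral.integral_eq_sub_of_hasDeriv_right_of_le hab
    (fun t ht => (hf t ht).continuousWithinAt) (fun t ht => ?_)
    ((intervalIntegrable_iff_integrableOn_Icc_of_le hab).2 hf')
  exact ((hf t (Ioo_subset_Icc_self ht)).hasDerivAt (Icc_mem_nhds ht.1 ht.2)).hasDerivWithinAt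

theorem integrable_prod_of_lintegral_lintegral_enorm_lt_top {α β F : Type*}
    [MeasurableSpace α] [MeasurableSpace β] [NormedAddCommGroup F]
    {μ : Measure α} {ν : Measure β} [SFinite ν] {f : α × β → F}
    (hf : AEStronglyMeasurable f (μ.prod ν)) (h : ∫⁻ a, ∫⁻ b, ‖f (a, b)‖ₑ ∂ν ∂μ < ∞) :
    Integrable f (μ.prod ν) :=
  ⟨hf, by rwa [HasFiniteIntegral, lintegral_prod _ hf.enorm]⟩

theorem ContinuousLinearMap.norm_apply_prod_one_le {E F : Type*} [NormedAddCommGroup E]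
    [NormedSpace ℝ E] [NormedAddCommGroup F] [NormedSpace ℝ F] (L : E × ℝ →L[ℝ] F) (w : E) :
    ‖L (w, 1)‖ ≤ ‖L‖ * ‖w‖ + ‖L‖ :=
  calc ‖L (w, 1)‖ ≤ ‖L‖ * max ‖w‖ ‖(1 : ℝ)‖ := L.le_opNorm (w, 1)
    _ ≤ ‖L‖ * (‖w‖ + 1) := by
      gcongr
      rw [norm_one]
      exact max_le (by linarith) (by linarith [norm_nonneg w])
    _ = ‖L‖ * ‖w‖ + ‖L‖ := by ring

section NormedSpace

variable {E : Type*} [NormedAddCommGroup E] [NormedSpace ℝ E]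

theorem integral_fderiv_along_curve_eq_zero {φ : E × ℝ → ℝ}
    (hφ : Differentiable ℝ φ) {a b : ℝ} (hab : a ≤ b) (hφ_supp : tsupport φ ⊆ univ ×ˢ Ioo a b)
    {γ γ' : ℝ → E} (hγ : ∀ t ∈ Icc a b, HasDerivWithinAt γ (γ' t) (Icc a b) t)
    (hint : IntegrableOn (fun t => fderiv ℝ φ (γ t, t) (γ' t, 1)) (Icc a b)) :
    ∫ t in Icc a b, fderiv ℝ φ (γ t, t) (γ' t, 1) = 0 := by
  have h_vanish : ∀ y, ∀ s ∉ Ioo a b, φ (y, s) = 0 := fun y s hs =>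
    image_eq_zero_of_notMem_tsupport fun h => hs (hφ_supp h).2
  rw [integral_Icc_eq_sub_of_hasDerivWithinAt (f := fun s => φ (γ s, s)) hab (fun t ht => ?_) hint,
    h_vanish _ b (by simp), h_vanish _ a (by simp), sub_zero]
  exact (hφ _).hasFDerivAt.comp_hasDerivWithinAt t ((hγ t ht).prodMk (hasDerivWithinAt_id t _))

theorem integrable_fderiv_along_flow [MeasurableSpace E] [BorelSpace E]
    [SecondCountableTopology E] {φ : E × ℝ → ℝ} (hφ : ContDiff ℝ 1 φ)
    (hφ_cpt : HasCompactSupport φ) {v : ℝ → E → E} (hv : Measurable (uncurry v))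
    {Φ : ℝ → E → E} {a b : ℝ} (hΦ : ContinuousOn (uncurry Φ) (Icc a b ×ˢ univ))
    {ρ : Measure E} [IsFiniteMeasure ρ]
    (hint : ∫⁻ t in Icc a b, ∫⁻ x, ‖v t (Φ t x)‖ₑ ∂ρ < ∞) :
    Integrable (fun p : ℝ × E => fderiv ℝ φ (Φ p.1 p.2, p.1) (v p.1 (Φ p.1 p.2), 1))
      ((volume.restrict (Icc a b)).prod ρ) := by
  have hΦ_meas : AEMeasurable (uncurry Φ) ((volume.restrict (Icc a b)).prod ρ) := by
    rw [Measure.restrict_prod_eq_prod_univ]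
    exact hΦ.aemeasurable (measurableSet_Icc.prod MeasurableSet.univ)
  have hv_meas : AEMeasurable (fun p : ℝ × E => v p.1 (Φ p.1 p.2))
      ((volume.restrict (Icc a b)).prod ρ) :=
    hv.comp_aemeasurable (measurable_fst.aemeasurable.prodMk hΦ_meas)
  have h_speed : Integrable (fun p : ℝ × E => ‖v p.1 (Φ p.1 p.2)‖)
      ((volume.restrict (Icc a b)).prod ρ) :=
    integrable_prod_of_lintegral_lintegral_enorm_lt_top hv_meas.norm.aestronglyMeasurable
      (by simpa using hint)
  obtain ⟨C, hC⟩ := (hφ.continuous_fderiv one_ne_zero).bounded_above_of_compact_support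
    (hφ_cpt.fderiv (𝕜 := ℝ))
  refine ((h_speed.const_mul C).add (integrable_const C)).mono' ?_ (ae_of_all _ fun p => ?_)
  · exact ((hφ.continuous_fderiv_apply one_ne_zero).measurable.comp_aemeasurable
      ((hΦ_meas.prodMk measurable_fst.aemeasurable).prodMk
        (hv_meas.prodMk aemeasurable_const))).aestronglyMeasurable
  · refine ((fderiv ℝ φ _).norm_apply_prod_one_le _).trans ?_
    have hC_p := hC (Φ p.1 p.2, p.1)
    show _ ≤ C * _ + C
    gcongr

end NormedSpace

section InnerProductSpace

variable {E : Type*} [NormedAddCommGroup E] [InnerProductSpace ℝ E] [CompleteSpace E]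

theorem deriv_add_inner_gradient_eq_fderiv {φ : E × ℝ → ℝ} {y : E} {t : ℝ}
    (hφ : DifferentiableAt ℝ φ (y, t)) (w : E) :
    deriv (fun s => φ (y, s)) t + ⟪w, gradient (fun y' => φ (y', t)) y⟫
      = fderiv ℝ φ (y, t) (w, 1) := by
  have h_time : HasDerivAt (fun s => φ (y, s)) (fderiv ℝ φ (y, t) (0, 1)) t :=
    hφ.hasFDerivAt.comp_hasDerivAt t ((hasDerivAt_const t y).prodMk (hasDerivAt_id t))
  have h_space : HasFDerivAt (fun y' => φ (y', t))
      ((fderiv ℝ φ (y, t)).comp (ContinuousLinearMap.inl ℝ E ℝ)) y :=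
    hφ.hasFDerivAt.comp y (hasFDerivAt_prodMk_left y t)
  have h_inner : ⟪w, gradient (fun y' => φ (y', t)) y⟫ = fderiv ℝ φ (y, t) (w, 0) := by
    rw [real_inner_comm, gradient, h_space.fderiv, InnerProductSpace.toDual_symm_apply]
    rfl
  rw [h_time.deriv, h_inner, ← map_add]
  norm_num

theorem integral_map_deriv_add_inner_gradient [MeasurableSpace E] [BorelSpace E]
    [SecondCountableTopology E] {X : Type*} [MeasurableSpace X] {ρ : Measure X}
    {φ : E × ℝ → ℝ} (hφ : ContDiff ℝ 1 φ) {t : ℝ} {w : E → E} (hw : Measurable w)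
    {f : X → E} (hf : AEMeasurable f ρ) :
    ∫ y, (deriv (fun s => φ (y, s)) t + ⟪w y, gradient (fun y' => φ (y', t)) y⟫) ∂(ρ.map f)
      = ∫ x, fderiv ℝ φ (f x, t) (w (f x), 1) ∂ρ := by
  simp_rw [deriv_add_inner_gradient_eq_fderiv (hφ.differentiable one_ne_zero _)]
  exact integral_map hf ((hφ.continuous_fderiv_apply one_ne_zero).measurable.comp
    ((measurable_id.prodMk measurable_const).prodMk
      (hw.prodMk measurable_const))).aestronglyMeasurable

end InnerProductSpace

theorem flow_pushforward_solves_continuity_equation_general (n : ℕ) (T : ℝ) (hT : 0 < T)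
    (v : ℝ → EuclideanSpace ℝ (Fin n) → EuclideanSpace ℝ (Fin n))
    (hv : Measurable (Function.uncurry v))
    (Φ : ℝ → EuclideanSpace ℝ (Fin n) → EuclideanSpace ℝ (Fin n))
    (hΦc : ContinuousOn (Function.uncurry Φ) (Set.Icc (0 : ℝ) T ×ˢ Set.univ))
    (hΦd : ∀ x, ∀ t ∈ Set.Icc (0 : ℝ) T,
      HasDerivWithinAt (fun s => Φ s x) (v t (Φ t x)) (Set.Icc (0 : ℝ) T) t)
    (ρ : Measure (EuclideanSpace ℝ (Fin n))) [IsProbabilityMeasure ρ]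
    (hint : (∫⁻ t in Set.Icc (0 : ℝ) T, ∫⁻ x, (‖v t (Φ t x)‖₊ : ℝ≥0∞) ∂ρ) < ⊤) :
    WeakContinuityEquation n T (fun t => ρ.map (Φ t)) v := by
  intro φ hφ hφ_cpt hφ_supp
  have hG := integrable_fderiv_along_flow hφ hφ_cpt hv hΦc hint
  have hΦ_cont : ∀ t ∈ Icc 0 T, Continuous (Φ t) := fun t ht =>
    hΦc.comp_continuous (Continuous.prodMk_right t) fun x => ⟨ht, mem_univ x⟩
  calc _ = ∫ t in Icc 0 T, ∫ x, fderiv ℝ φ (Φ t x, t) (v t (Φ t x), 1) ∂ρ :=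
        setIntegral_congr_fun measurableSet_Icc fun t ht =>
          integral_map_deriv_add_inner_gradient hφ (hv.comp measurable_prodMk_left)
            (hΦ_cont t ht).aemeasurable
    _ = ∫ x, (∫ t in Icc 0 T, fderiv ℝ φ (Φ t x, t) (v t (Φ t x), 1)) ∂ρ :=
        integral_integral_swap hG
    _ = 0 := integral_eq_zero_of_ae <| hG.prod_left_ae.mono fun x hx =>
        integral_fderiv_along_curve_eq_zero (hφ.differentiable one_ne_zero) hT.le hφ_supp
          (hΦd x) hx

/-- The pushforward `ρ_t = Φ(t,·)#ρ` of an initial probability measure `ρ`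
along the flow `Φ` of a Borel vector field `v` solves the weak continuity equation. -/
theorem flow_pushforward_solves_continuity_equation (n : ℕ) (T : ℝ) (hT : 0 < T)
    (v : ℝ → EuclideanSpace ℝ (Fin n) → EuclideanSpace ℝ (Fin n))
    (hv : Measurable (Function.uncurry v))
    (Φ : ℝ → EuclideanSpace ℝ (Fin n) → EuclideanSpace ℝ (Fin n))
    (hΦc : ContinuousOn (Function.uncurry Φ) (Set.Icc (0 : ℝ) T ×ˢ Set.univ))
    (hΦ0 : ∀ x, Φ 0 x = x)
    (hΦd : ∀ x, ∀ t ∈ Set.Icc (0 : ℝ) T,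
      HasDerivWithinAt (fun s => Φ s x) (v t (Φ t x)) (Set.Icc (0 : ℝ) T) t)
    (ρ : Measure (EuclideanSpace ℝ (Fin n))) [IsProbabilityMeasure ρ]
    (hint : (∫⁻ t in Set.Icc (0 : ℝ) T, ∫⁻ x, (‖v t (Φ t x)‖₊ : ℝ≥0∞) ∂ρ) < ⊤) :
    WeakContinuityEquation n T (fun t => ρ.map (Φ t)) v :=
  flow_pushforward_solves_continuity_equation_general n T hT v hv Φ hΦc hΦd ρ hint
end

section
/- Let T > 0 and let f : ℝ^n → ℝ^m be continuously differentiable, injective, and proper (preimages of compact sets are compact). Let (ρ_t)_{t∈[0,T]} be Borel probability measures on ℝ^n and v : [0,T] × ℝ^n → ℝ^n a Borel vector field with ∫_0^T ∫ |v(t,x)| dρ_t(x) dt < ∞ such that (ρ_t, v) satisfies the weak continuity equation on ℝ^n. Let g : ℝ^m → ℝ^n be any function with g(f(x)) = x for all x, define ν_t = f#ρ_t and w : [0,T] × ℝ^m → ℝ^m by w(t,y) = Df_{g(y)}(v(t, g(y))). Then (ν_t, w) satisfies the weak continuity equation on ℝ^m: for every continuously differentiable φ : ℝ^m × [0,T]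 → ℝ with compact support contained in ℝ^m × (0,T), ∫_0^T ∫_{ℝ^m} (∂_t φ(y,t) + ⟨w(t,y), ∇_y φ(y,t)⟩) dν_t(y) dt = 0. -/
/-! Composing a test function `φ` on `ℝᵐ × ℝ` with `f × id` gives a test function on `ℝⁿ × ℝ`:
properness and injectivity make `f` a closed embedding, so compactness of the support and its
position in time survive. By the change of variables `y = f x` and the chain rule
`∇ₓ φ(f x, t) = (Df_x)ᵀ ∇_y φ(f x, t)`, the continuity-equation integrand of the composed
function for `(ρₜ, v)` has the same integral against `ρₜ` as the integrand of `φ` for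
`(f#ρₜ, w)` against `f#ρₜ`. -/

open MeasureTheory
open scoped RealInnerProductSpace ENNReal

open Topology

section Pullback

variable {E F : Type*} [NormedAddCommGroup E] [InnerProductSpace ℝ E] [CompleteSpace E]
  [NormedAddCommGroup F] [InnerProductSpace ℝ F] [CompleteSpace F]

noncomputable def continuityIntegrand (v : E → E) (φ : E × ℝ → ℝ) (t : ℝ) (x : E) : ℝ :=
  deriv (fun s => φ (x, s)) t + ⟪v x, gradient (fun y => φ (y, t)) x⟫

lemma inner_gradient_comp {h : F → ℝ} {f : E → F} {x : E} (hh : DifferentiableAt ℝ h (f x))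
    (hf : DifferentiableAt ℝ f x) (u : E) :
    ⟪u, gradient (h ∘ f) x⟫ = ⟪fderiv ℝ f x u, gradient h (f x)⟫ := by
  simp [inner_gradient_right, fderiv_comp x hh hf]

lemma integral_map_continuityIntegrand [MeasurableSpace E] [MeasurableSpace F] {f : E → F}
    (hme : MeasurableEmbedding f) (hf : Differentiable ℝ f) {g : F → E} (hg : ∀ x, g (f x) = x)
    {φ : F × ℝ → ℝ} {t : ℝ} (hφ : Differentiable ℝ fun y => φ (y, t)) (μ : Measure E)
    (v : E → E) :
    ∫ y, continuityIntegrand (fun y => fderiv ℝ f (g y) (v (g y))) φ t y ∂(μ.map f) =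
      ∫ x, continuityIntegrand v (φ ∘ Prod.map f id) t x ∂μ := by
  rw [hme.integral_map]
  refine integral_congr_ae (.of_forall fun x => ?_)
  simp only [continuityIntegrand, hg]
  congr 1
  exact (inner_gradient_comp (hφ _) (hf x) (v x)).symm

end Pullback

theorem pushforward_satisfies_continuity_equation_general (n m : ℕ) (T : ℝ)
    (f : EuclideanSpace ℝ (Fin n) → EuclideanSpace ℝ (Fin m))
    (hf : ContDiff ℝ 1 f) (hinj : Function.Injective f)
    (hproper : ∀ K : Set (EuclideanSpace ℝ (Fin m)), IsCompact K → IsCompact (f ⁻¹' K))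
    (ρ : ℝ → Measure (EuclideanSpace ℝ (Fin n)))
    (v : ℝ → EuclideanSpace ℝ (Fin n) → EuclideanSpace ℝ (Fin n))
    (hCE : WeakContinuityEquation n T ρ v)
    (g : EuclideanSpace ℝ (Fin m) → EuclideanSpace ℝ (Fin n))
    (hg : ∀ x, g (f x) = x) :
    WeakContinuityEquation m T (fun t => (ρ t).map f)
      (fun t y => fderiv ℝ f (g y) (v t (g y))) := by
  intro φ hφ hφ_compact hφ_supp
  have hfe : IsClosedEmbedding f := .of_continuous_injective_isClosedMap hf.continuous hinj
    (isProperMap_iff_isCompact_preimage.2 ⟨hf.continuous, fun K hK => hproper K hK⟩).isClosedMap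
  have hF : IsClosedEmbedding (Prod.map f id : _ → _ × ℝ) := hfe.prodMap .id
  have hpull_supp : tsupport (φ ∘ Prod.map f id) ⊆ Set.univ ×ˢ Set.Ioo 0 T :=
    (tsupport_comp_subset_preimage φ hF.continuous).trans fun p hp => ⟨trivial, (hφ_supp hp).2⟩
  have hpull := hCE (φ ∘ Prod.map f id) (hφ.comp (hf.prodMap contDiff_id))
    (hφ_compact.comp_isClosedEmbedding hF) hpull_supp
  rw [← hpull]
  congr with t
  have hφ_slice : Differentiable ℝ fun y => φ (y, t) :=
    (hφ.differentiable one_ne_zero).comp (by fun_prop)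
  exact integral_map_continuityIntegrand hfe.measurableEmbedding (hf.differentiable one_ne_zero)
    hg hφ_slice (ρ t) (v t)

/-- If `(ρ_t, v)` satisfies the weak continuity equation on `ℝⁿ` and
`f : ℝⁿ → ℝᵐ` is `C¹`, injective and proper, then the pushforward curve `ν_t = f#ρ_t`
together with the transported velocity field `w(t,y) = Df_{f⁻¹(y)}(v(t, f⁻¹(y)))` satisfies
the weak continuity equation on `ℝᵐ`. -/
theorem pushforward_satisfies_continuity_equation (n m : ℕ) (T : ℝ) (hT : 0 < T)
    (f : EuclideanSpace ℝ (Fin n) → EuclideanSpace ℝ (Fin m))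
    (hf : ContDiff ℝ 1 f) (hinj : Function.Injective f)
    (hproper : ∀ K : Set (EuclideanSpace ℝ (Fin m)), IsCompact K → IsCompact (f ⁻¹' K))
    (ρ : ℝ → Measure (EuclideanSpace ℝ (Fin n)))
    (hρ : ∀ t, IsProbabilityMeasure (ρ t))
    (v : ℝ → EuclideanSpace ℝ (Fin n) → EuclideanSpace ℝ (Fin n))
    (hv : Measurable (Function.uncurry v))
    (hint : (∫⁻ t in Set.Icc (0 : ℝ) T, ∫⁻ x, (‖v t x‖₊ : ℝ≥0∞) ∂(ρ t)) < ⊤)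
    (hCE : WeakContinuityEquation n T ρ v)
    (g : EuclideanSpace ℝ (Fin m) → EuclideanSpace ℝ (Fin n))
    (hg : ∀ x, g (f x) = x) :
    WeakContinuityEquation m T (fun t => (ρ t).map f)
      (fun t y => fderiv ℝ f (g y) (v t (g y))) :=
  pushforward_satisfies_continuity_equation_general n m T f hf hinj hproper ρ v hCE g hg
end

section
/- Let T > 0, let (ρ_t)_{t∈[0,T]} be Borel probability measures on ℝ^n, and let v : [0,T] × ℝ^n → ℝ^n be a Borel vector field with v(t,·) ∈ L²(ρ_t; ℝ^n) for a.e. t and ∫_0^T ‖v(t,·)‖_{L²(ρ_t)} dt < ∞, such that (ρ_t, v) satisfies the weak continuity equation. Let u : [0,T] × ℝ^n → ℝ^n be a Borel vector field such that for a.e. t ∈ [0,T], u(t,·) equals, as an element of L²(ρ_t; ℝ^n), the orthogonal projection of v(t,·) onto the closure T_{ρ_t} in L²(ρ_t; ℝ^n) of {∇φ : φ ∈ C_c^∞(ℝ^n)}. Then (ρ_t, u) also satisfies the weak continuity equation. -/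
/-!
At a.e. time `t` the difference `v t - u t` is orthogonal in `L²(ρ t)` to `Tt t`. The spatial
gradient of a `C¹` test function at time `t` lies in `Tt t`: mollification approximates it
uniformly by gradients of smooth compactly supported functions, and uniform approximation is
`L²` approximation for a finite measure. Hence the terms `⟨u, ∇ₓφ⟩` and `⟨v, ∇ₓφ⟩` have the same
`ρ t`-integral, while the term `∂ₜφ` does not involve the field at all.
-/

open MeasureTheory
open scoped RealInnerProductSpace ENNReal

theorem ContinuousLinearMap.precompR_lsmul {𝕜 E F : Type*} [NontriviallyNormedField 𝕜]
    [NormedAddCommGroup E] [NormedSpace 𝕜 E] [NormedAddCommGroup F] [NormedSpace 𝕜 F] :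
    precompR E (lsmul 𝕜 𝕜 : 𝕜 →L[𝕜] F →L[𝕜] F) = lsmul 𝕜 𝕜 := by
  ext a L
  simp [precompR]

section Mollification

open scoped ContDiff Convolution

variable {E F : Type*} [NormedAddCommGroup E] [NormedSpace ℝ E] [FiniteDimensional ℝ E]
  [NormedAddCommGroup F] [NormedSpace ℝ F] [CompleteSpace F]

theorem HasCompactSupport.exists_contDiff_norm_fderiv_sub_le {f : E → F}
    (hfc : HasCompactSupport f) (hf : ContDiff ℝ 1 f) {ε : ℝ} (hε : 0 < ε) :
    ∃ ψ : E → F, ContDiff ℝ ∞ ψ ∧ HasCompactSupport ψ ∧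
      ∀ x, ‖fderiv ℝ ψ x - fderiv ℝ f x‖ ≤ ε := by
  borelize E
  obtain ⟨δ, hδ, hfδ⟩ := Metric.uniformContinuous_iff.mp
    ((hfc.fderiv ℝ).uniformContinuous_of_continuous (hf.continuous_fderiv one_ne_zero)) ε hε
  let c : ContDiffBump (0 : E) := ⟨δ / 2, δ, half_pos hδ, half_lt_self hδ⟩
  let μ : Measure E := .addHaar
  refine ⟨c.normed μ ⋆[ContinuousLinearMap.lsmul ℝ ℝ, μ] f,
    c.hasCompactSupport_normed.contDiff_convolution_left _ c.contDiff_normed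
      hf.continuous.locallyIntegrable,
    c.hasCompactSupport_normed.convolution _ hfc, fun x => ?_⟩
  -- differentiating the mollification `c ⋆ f` mollifies `fderiv f` with the same kernel
  have hderiv := (hfc.hasFDerivAt_convolution_right (ContinuousLinearMap.lsmul ℝ ℝ)
    (c.integrable_normed (μ := μ)).locallyIntegrable hf x).fderiv
  rw [ContinuousLinearMap.precompR_lsmul] at hderiv
  rw [hderiv, ← dist_eq_norm]
  exact c.dist_normed_convolution_le (hf.continuous_fderiv one_ne_zero).aestronglyMeasurable
    fun y hy => (hfδ (by simpa [dist_comm] using hy)).le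

end Mollification

section Gradient

variable {E : Type*} [NormedAddCommGroup E] [InnerProductSpace ℝ E] [CompleteSpace E]
  {f g : E → ℝ}

theorem ContDiff.continuous_gradient (hf : ContDiff ℝ 1 f) : Continuous (gradient f) :=
  (InnerProductSpace.toDual ℝ E).symm.continuous.comp (hf.continuous_fderiv one_ne_zero)

theorem HasCompactSupport.gradient (hf : HasCompactSupport f) : HasCompactSupport (gradient f) :=
  (hf.fderiv ℝ).comp_left (map_zero _)

theorem norm_gradient_sub_gradient (x y : E) :
    ‖gradient f x - gradient g y‖ = ‖fderiv ℝ f x - fderiv ℝ g y‖ := by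
  rw [gradient, gradient, ← map_sub, LinearIsometryEquiv.norm_map]

end Gradient

section SmoothGradients

variable {E : Type*} [NormedAddCommGroup E] [InnerProductSpace ℝ E]

def smoothGradients [CompleteSpace E] [MeasurableSpace E] (μ : Measure E) : Set (Lp E 2 μ) :=
  {g | ∃ φ : E → ℝ, ContDiff ℝ (⊤ : ℕ∞) φ ∧ HasCompactSupport φ ∧ ⇑g =ᵐ[μ] gradient φ}

variable [FiniteDimensional ℝ E] [MeasurableSpace E] [BorelSpace E]
  {μ : Measure E} [IsFiniteMeasure μ]

theorem MeasureTheory.MemLp.toLp_gradient_mem_closure_smoothGradients {f : E → ℝ}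
    (hf : ContDiff ℝ 1 f) (hfc : HasCompactSupport f) (hmem : MemLp (gradient f) 2 μ) :
    hmem.toLp (gradient f) ∈ closure (smoothGradients μ) := by
  rw [Metric.mem_closure_iff]
  intro ε hε
  set C : ℝ := measureUnivNNReal μ ^ (2 : ℝ≥0∞).toReal⁻¹
  obtain ⟨ψ, hψ, hψc, hψf⟩ :=
    hfc.exists_contDiff_norm_fderiv_sub_le hf (div_pos hε (by positivity : (0 : ℝ) < C + 1))
  have hψmem : MemLp (gradient ψ) 2 μ :=
    (hψ.of_le (by simp)).continuous_gradient.memLp_of_hasCompactSupport hψc.gradient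
  refine ⟨hψmem.toLp _, ⟨ψ, hψ, hψc, hψmem.coeFn_toLp⟩, ?_⟩
  rw [dist_eq_norm]
  calc ‖hmem.toLp (gradient f) - hψmem.toLp (gradient ψ)‖
      ≤ C * (ε / (C + 1)) := by
        refine Lp.norm_le_of_ae_bound (by positivity) ?_
        filter_upwards [Lp.coeFn_sub (hmem.toLp _) (hψmem.toLp _), hmem.coeFn_toLp,
          hψmem.coeFn_toLp] with x hsub hf' hψ'
        rw [hsub, Pi.sub_apply, hf', hψ', norm_sub_rev, norm_gradient_sub_gradient]
        exact hψf x
    _ < ε := by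
        rw [mul_div_assoc', div_lt_iff₀ (by positivity)]
        nlinarith

end SmoothGradients

section L2

variable {α 𝕜 E : Type*} [MeasurableSpace α] {μ : Measure α} [RCLike 𝕜]
  [NormedAddCommGroup E] [InnerProductSpace 𝕜 E] {f g : α → E}

theorem MeasureTheory.MemLp.inner_toLp (hf : MemLp f 2 μ) (hg : MemLp g 2 μ) :
    inner 𝕜 (hf.toLp f) (hg.toLp g) = ∫ x, inner 𝕜 (f x) (g x) ∂μ := by
  rw [L2.inner_def]
  refine integral_congr_ae ?_
  filter_upwards [hf.coeFn_toLp, hg.coeFn_toLp] with x hfx hgx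
  rw [hfx, hgx]

theorem MeasureTheory.MemLp.integrable_inner (hf : MemLp f 2 μ) (hg : MemLp g 2 μ) :
    Integrable (fun x => inner 𝕜 (f x) (g x)) μ := by
  refine (L2.integrable_inner (𝕜 := 𝕜) (hf.toLp f) (hg.toLp g)).congr ?_
  filter_upwards [hf.coeFn_toLp, hg.coeFn_toLp] with x hfx hgx
  rw [hfx, hgx]

theorem integral_inner_eq_of_toLp_eq_orthogonalProjectionOnto {u v : α → E}
    (K : Submodule 𝕜 (Lp E 2 μ)) [K.HasOrthogonalProjection]
    (hu : MemLp u 2 μ) (hv : MemLp v 2 μ) (hg : MemLp g 2 μ)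
    (huv : hu.toLp u = K.orthogonalProjectionOnto (hv.toLp v)) (hgK : hg.toLp g ∈ K) :
    ∫ x, inner 𝕜 (u x) (g x) ∂μ = ∫ x, inner 𝕜 (v x) (g x) ∂μ := by
  have horth := K.starProjection_inner_eq_zero (hv.toLp v) _ hgK
  rw [inner_sub_left, sub_eq_zero] at horth
  rw [← hu.inner_toLp, ← hv.inner_toLp, huv]
  exact horth.symm

end L2

section TimeSlices

theorem HasCompactSupport.comp_prodMk_left {X Y M : Type*} [TopologicalSpace X]
    [R1Space X] [TopologicalSpace Y] [Zero M] {φ : X × Y → M} (hφ : HasCompactSupport φ)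
    (t : Y) :
    HasCompactSupport fun x => φ (x, t) :=
  .intro (hφ.image continuous_fst) fun x hx =>
    image_eq_zero_of_notMem_tsupport fun h => hx ⟨(x, t), h, rfl⟩

variable {𝕜 E F : Type*} [NontriviallyNormedField 𝕜] [NormedAddCommGroup E] [NormedSpace 𝕜 E]
  [NormedAddCommGroup F] [NormedSpace 𝕜 F] {φ : E × 𝕜 → F}

theorem DifferentiableAt.deriv_comp_prodMk_right {x : E} {t : 𝕜}
    (hφ : DifferentiableAt 𝕜 φ (x, t)) :
    deriv (fun s => φ (x, s)) t = fderiv 𝕜 φ (x, t) (0, 1) :=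
  (hφ.hasFDerivAt.comp_hasDerivAt t ((hasDerivAt_const t x).prodMk (hasDerivAt_id t))).deriv

theorem HasCompactSupport.integrable_deriv_comp_prodMk_right [MeasurableSpace E]
    [OpensMeasurableSpace E] {μ : Measure E} [IsFiniteMeasureOnCompacts μ]
    (hφc : HasCompactSupport φ) (hφ : ContDiff 𝕜 1 φ) (t : 𝕜) :
    Integrable (fun x => deriv (fun s => φ (x, s)) t) μ := by
  have hderiv : (fun x => deriv (fun s => φ (x, s)) t) = fun x => fderiv 𝕜 φ (x, t) (0, 1) :=
    funext fun x => (hφ.differentiable one_ne_zero _).deriv_comp_prodMk_right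
  rw [hderiv]
  exact Continuous.integrable_of_hasCompactSupport
    (((hφ.continuous_fderiv one_ne_zero).comp (.prodMk_left t)).clm_apply continuous_const)
    (((hφc.fderiv 𝕜).comp_left (g := fun L : E × 𝕜 →L[𝕜] F => L (0, 1)) rfl).comp_prodMk_left t)

end TimeSlices

theorem continuity_equation_of_tangent_projection_general (n : ℕ) (T : ℝ)
    (ρ : ℝ → Measure (EuclideanSpace ℝ (Fin n)))
    (hρ : ∀ t, IsProbabilityMeasure (ρ t))
    (Tt : ∀ t : ℝ, Submodule ℝ (Lp (EuclideanSpace ℝ (Fin n)) 2 (ρ t)))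
    (hTt : ∀ t, (Tt t : Set (Lp (EuclideanSpace ℝ (Fin n)) 2 (ρ t))) =
      closure {g : Lp (EuclideanSpace ℝ (Fin n)) 2 (ρ t) |
        ∃ φ : EuclideanSpace ℝ (Fin n) → ℝ, ContDiff ℝ (⊤ : ℕ∞) φ ∧ HasCompactSupport φ ∧
          ⇑g =ᵐ[ρ t] gradient φ})
    (hcomp : ∀ t, CompleteSpace (Tt t))
    (v u : ℝ → EuclideanSpace ℝ (Fin n) → EuclideanSpace ℝ (Fin n))
    (hCE : WeakContinuityEquation n T ρ v)
    (hproj : ∀ᵐ t ∂(volume.restrict (Set.Icc (0 : ℝ) T)),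
      ∃ (hvt : MemLp (v t) 2 (ρ t)) (hut : MemLp (u t) 2 (ρ t)),
        haveI := hcomp t
        hut.toLp (u t) =
          (Submodule.orthogonalProjectionOnto (Tt t) (hvt.toLp (v t)) :
            Lp (EuclideanSpace ℝ (Fin n)) 2 (ρ t))) :
    WeakContinuityEquation n T ρ u := by
  intro φ hφ hφc hφs
  refine (integral_congr_ae ?_).trans (hCE φ hφ hφc hφs)
  filter_upwards [hproj] with t ⟨hvt, hut, huv⟩
  have := hρ t
  have := hcomp t
  have hf : ContDiff ℝ 1 fun y => φ (y, t) := hφ.comp (contDiff_id.prodMk contDiff_const)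
  have hfc : HasCompactSupport fun y => φ (y, t) := hφc.comp_prodMk_left t
  have hg : MemLp (gradient fun y => φ (y, t)) 2 (ρ t) :=
    hf.continuous_gradient.memLp_of_hasCompactSupport hfc.gradient
  have hgT : hg.toLp _ ∈ Tt t := by
    rw [← SetLike.mem_coe, hTt t]
    exact hg.toLp_gradient_mem_closure_smoothGradients hf hfc
  have hA := hφc.integrable_deriv_comp_prodMk_right (μ := ρ t) hφ t
  rw [integral_add hA (hut.integrable_inner hg), integral_add hA (hvt.integrable_inner hg),
    integral_inner_eq_of_toLp_eq_orthogonalProjectionOnto (Tt t) hut hvt hg huv hgT]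

/-- Replacing, for a.e. `t`, the driving velocity field `v(t,·)` of a
solution of the weak continuity equation by its orthogonal projection `u(t,·)` onto the
Wasserstein tangent space `T_{ρ_t}` (the `L²(ρ_t)`-closure of gradients of smooth compactly
supported functions) preserves the weak continuity equation. -/
theorem continuity_equation_of_tangent_projection (n : ℕ) (T : ℝ) (hT : 0 < T)
    (ρ : ℝ → Measure (EuclideanSpace ℝ (Fin n)))
    (hρ : ∀ t, IsProbabilityMeasure (ρ t))
    (Tt : ∀ t : ℝ, Submodule ℝ (Lp (EuclideanSpace ℝ (Fin n)) 2 (ρ t)))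
    (hTt : ∀ t, (Tt t : Set (Lp (EuclideanSpace ℝ (Fin n)) 2 (ρ t))) =
      closure {g : Lp (EuclideanSpace ℝ (Fin n)) 2 (ρ t) |
        ∃ φ : EuclideanSpace ℝ (Fin n) → ℝ, ContDiff ℝ (⊤ : ℕ∞) φ ∧ HasCompactSupport φ ∧
          ⇑g =ᵐ[ρ t] gradient φ})
    (hcomp : ∀ t, CompleteSpace (Tt t))
    (v u : ℝ → EuclideanSpace ℝ (Fin n) → EuclideanSpace ℝ (Fin n))
    (hv : Measurable (Function.uncurry v)) (hu : Measurable (Function.uncurry u))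
    (hvL2 : ∀ᵐ t ∂(volume.restrict (Set.Icc (0 : ℝ) T)), MemLp (v t) 2 (ρ t))
    (hvint : (∫⁻ t in Set.Icc (0 : ℝ) T, eLpNorm (v t) 2 (ρ t)) < ⊤)
    (hCE : WeakContinuityEquation n T ρ v)
    (hproj : ∀ᵐ t ∂(volume.restrict (Set.Icc (0 : ℝ) T)),
      ∃ (hvt : MemLp (v t) 2 (ρ t)) (hut : MemLp (u t) 2 (ρ t)),
        haveI := hcomp t
        hut.toLp (u t) =
          (Submodule.orthogonalProjectionOnto (Tt t) (hvt.toLp (v t)) :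
            Lp (EuclideanSpace ℝ (Fin n)) 2 (ρ t))) :
    WeakContinuityEquation n T ρ u :=
  continuity_equation_of_tangent_projection_general n T ρ hρ Tt hTt hcomp v u hCE hproj
end
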